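/- Both eigenvalues of the Hessian of G₂ at any nonzero m ∈ ℝ² are strictly negative; in particular G₂ is concave on ℝ². -/

import Mathlib

/-!
At nonzero `m` the Hessian is `a • 1 + b • m mᵀ` with `a = -α₂ p / D < 0`, `b > 0` and
`D = p q + (p + q) ‖m‖`; its eigenvalues are `a` (on `m⊥`) and
`a + b ‖m‖² = -α₂ p² q / D² < 0`.

With `c = p q / (p + q)` one has `G₂ m = α₂ p / (p + q) * (c log (c + ‖m‖) - ‖m‖)`, and
`t ↦ c log (c + t) - t` is concave and nonincreasing on `[0, ∞)`, so its composition with the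
convex function `‖·‖` is concave.
-/

open Real Set Matrix

theorem Matrix.smul_one_add_smul_vecMulVec_mulVec {n K : Type*} [Fintype n] [DecidableEq n]
    [Field K] (a b : K) (u v : n → K) :
    (a • (1 : Matrix n n K) + b • vecMulVec u u) *ᵥ v = a • v + (b * (u ⬝ᵥ v)) • u := by
  rw [add_mulVec, smul_mulVec, smul_mulVec, one_mulVec, vecMulVec_mulVec, op_smul_eq_smul,
    smul_smul]

theorem Matrix.eq_or_eq_of_smul_one_add_smul_vecMulVec_mulVec_eq {n K : Type*} [Fintype n]
    [DecidableEq n] [Field K] {a b μ : K} {u v : n → K} (hv : v ≠ 0)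
    (h : (a • (1 : Matrix n n K) + b • vecMulVec u u) *ᵥ v = μ • v) :
    μ = a ∨ μ = a + b * (u ⬝ᵥ u) := by
  rw [smul_one_add_smul_vecMulVec_mulVec] at h
  by_cases huv : u ⬝ᵥ v = 0
  · left
    rw [huv, mul_zero, zero_smul, add_zero, ← sub_eq_zero, ← sub_smul, smul_eq_zero] at h
    exact (sub_eq_zero.1 (h.resolve_right hv)).symm
  · right
    have hdot := congrArg (u ⬝ᵥ ·) h
    simp only [dotProduct_add, dotProduct_smul, smul_eq_mul] at hdot
    exact mul_right_cancel₀ huv (by linear_combination -hdot)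

theorem EuclideanSpace.ofLp_dotProduct_self {ι : Type*} [Fintype ι] (x : EuclideanSpace ℝ ι) :
    WithLp.ofLp x ⬝ᵥ WithLp.ofLp x = ‖x‖ ^ 2 := by
  rw [← real_inner_self_eq_norm_sq, EuclideanSpace.inner_eq_star_dotProduct, star_trivial]

theorem concaveOn_mul_log_add_sub {c : ℝ} (hc : 0 < c) :
    ConcaveOn ℝ (Ici 0) (fun t => c * log (c + t) - t) := by
  have hlog : ConcaveOn ℝ (Ici 0) (log ∘ fun t => c + t) :=
    (strictConcaveOn_log_Ioi.concaveOn.translate_right c).subset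
      (fun t (ht : 0 ≤ t) => show 0 < c + t by linarith) (convex_Ici 0)
  exact (hlog.smul hc.le).sub (convexOn_id (convex_Ici 0))

theorem antitoneOn_mul_log_add_sub {c : ℝ} (hc : 0 < c) :
    AntitoneOn (fun t => c * log (c + t) - t) (Ici 0) := by
  intro s (hs : 0 ≤ s) t _ hst
  have hcs : 0 < c + s := by linarith
  have hlog : log (c + t) - log (c + s) ≤ (t - s) / (c + s) := by
    rw [← log_div (by linarith) hcs.ne']
    calc log ((c + t) / (c + s)) ≤ (c + t) / (c + s) - 1 :=
          log_le_sub_one_of_pos (div_pos (by linarith) hcs)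
      _ = (t - s) / (c + s) := by field_simp; ring
  have hfrac : c * ((t - s) / (c + s)) ≤ t - s := by
    rw [mul_div_left_comm]
    exact mul_le_of_le_one_right (sub_nonneg.2 hst) ((div_le_one hcs).2 (by linarith))
  have := (mul_le_mul_of_nonneg_left hlog hc.le).trans hfrac
  linarith

theorem ConcaveOn.comp_norm_of_antitoneOn {E : Type*} [SeminormedAddCommGroup E]
    [NormedSpace ℝ E] {g : ℝ → ℝ} (hg : ConcaveOn ℝ (Ici 0) g) (hg' : AntitoneOn g (Ici 0)) :
    ConcaveOn ℝ univ (fun x : E => g ‖x‖) := by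
  refine ⟨convex_univ, fun x _ y _ a b ha hb hab => ?_⟩
  have hnorm : ‖a • x + b • y‖ ≤ a * ‖x‖ + b * ‖y‖ := by
    simpa [norm_smul, abs_of_nonneg ha, abs_of_nonneg hb] using norm_add_le (a • x) (b • y)
  calc a • g ‖x‖ + b • g ‖y‖ ≤ g (a • ‖x‖ + b • ‖y‖) :=
        hg.2 (norm_nonneg x) (norm_nonneg y) ha hb hab
    _ ≤ g ‖a • x + b • y‖ :=
        hg' (norm_nonneg _) (show 0 ≤ a • ‖x‖ + b • ‖y‖ by positivity) hnorm

/-- Both eigenvalues of the Hessian of G₂ at nonzero m are < 0; in particular G₂ is concave. -/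
theorem stmt_5 (α₂ p q : ℝ) (hα : 0 < α₂) (hp : 0 < p) (hpq : p < q) :
    (∀ m : EuclideanSpace ℝ (Fin 2), m ≠ 0 →
      ∀ μ : ℝ, (∃ v : Fin 2 → ℝ, v ≠ 0 ∧
          ((-(α₂ * p / (p * q + (p + q) * ‖m‖))) • (1 : Matrix (Fin 2) (Fin 2) ℝ) +
            (α₂ * p * (p + q) / (p * q + (p + q) * ‖m‖) ^ 2 / ‖m‖) •
              Matrix.vecMulVec (fun i => m i) (fun i => m i)).mulVec v = μ • v) →
        μ < 0) ∧
    ConcaveOn ℝ Set.univ (fun m : EuclideanSpace ℝ (Fin 2) =>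
      α₂ * (-(p * ‖m‖ / (p + q)) +
        p ^ 2 * q / (p + q) ^ 2 * Real.log (p * q / (p + q) + ‖m‖))) := by
  have hq : 0 < q := hp.trans hpq
  have hc : 0 < p * q / (p + q) := by positivity
  constructor
  · rintro m hm μ ⟨v, hv, heq⟩
    have hm' : 0 < ‖m‖ := norm_pos_iff.mpr hm
    have hD : 0 < p * q + (p + q) * ‖m‖ := by positivity
    rcases eq_or_eq_of_smul_one_add_smul_vecMulVec_mulVec_eq hv heq with rfl | rfl
    · have : 0 < α₂ * p / (p * q + (p + q) * ‖m‖) := by positivity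
      linarith
    · rw [EuclideanSpace.ofLp_dotProduct_self]
      have hsecond : -(α₂ * p / (p * q + (p + q) * ‖m‖)) +
          α₂ * p * (p + q) / (p * q + (p + q) * ‖m‖) ^ 2 / ‖m‖ * ‖m‖ ^ 2 =
          -(α₂ * p ^ 2 * q / (p * q + (p + q) * ‖m‖) ^ 2) := by
        field_simp; ring
      rw [hsecond, neg_lt_zero]
      positivity
  · have hprofile := (concaveOn_mul_log_add_sub hc).smul (show 0 ≤ α₂ * p / (p + q) by positivity)
    have hanti : AntitoneOn (fun t => (α₂ * p / (p + q)) • (p * q / (p + q) *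
        log (p * q / (p + q) + t) - t)) (Ici 0) := fun s hs t ht hst =>
      mul_le_mul_of_nonneg_left (antitoneOn_mul_log_add_sub hc hs ht hst) (by positivity)
    refine (hprofile.comp_norm_of_antitoneOn hanti).congr fun m _ => ?_
    simp only [smul_eq_mul]
    field_simp
    ring
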